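/- Fix ε ∈ (0, 1/2], integers U ≥ 1 and ℓ ≥ 0 such that 2^ℓ divides U, and d ∈ [0,1]. Write t = tanh(ε/2) and m = U/2^ℓ. Let b_1, …, b_m be i.i.d. Bernoulli(1/2 + t(d − 1/2)) random variables, let L be an independent real random variable with Laplace(0, 2^ℓ/(εU)) distribution, and define the estimator d̃ = (1/t)·((1/m)·Σ_{i=1}^m b_i − 1/2 + t/2) + L. Then E[d̃] = d, and the mean squared error satisfies E[(d̃ − d)²] ≤ 2^{ℓ−2}/(U·t²) + 2^{2ℓ+1}/(U²ε²). -/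

import Mathlib

open MeasureTheory ProbabilityTheory

/-- The law of a `Laplace(0, b)` random variable: the measure on `ℝ` with density
`x ↦ (1/(2b))·exp(−|x|/b)` with respect to Lebesgue measure. -/
noncomputable def laplaceMeasure (b : ℝ) : Measure ℝ :=
  volume.withDensity fun x => ENNReal.ofReal (1 / (2 * b) * Real.exp (-|x| / b))

/-!
Writing `d̃ = (t - 1)/(2t) + (1/(tm)) ∑ bᵢ + L` exhibits the estimator as an affine function of a
binomial count with success probability `p = 1/2 + t(d - 1/2)`, plus independent Laplace noise.
The count has mean `mp` and the noise is centred (its density is even), which gives `E[d̃] = d`.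
The mean squared error is then the variance, which splits by independence into
`p(1 - p)/(t²m) ≤ 1/(4t²m)` and the Laplace variance `2β²`, `β = 2^ℓ/(εU)`, obtained from the
Gamma integral `∫₀^∞ x² e^{-x/β} dx = 2β³`.
-/

open Real

lemma tanh_pos_of_pos {x : ℝ} (hx : 0 < x) : 0 < tanh x := by
  rw [tanh_eq_sinh_div_cosh]
  exact div_pos (sinh_pos_iff.2 hx) (cosh_pos x)

section Laplace

variable {β : ℝ}

lemma integral_laplaceMeasure (hβ : 0 ≤ β) (g : ℝ → ℝ) :
    ∫ x, g x ∂laplaceMeasure β = ∫ x, 1 / (2 * β) * exp (-|x| / β) * g x := by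
  rw [laplaceMeasure, integral_withDensity_eq_integral_toReal_smul (by fun_prop)
    (.of_forall fun _ ↦ ENNReal.ofReal_lt_top)]
  simp_rw [ENNReal.toReal_ofReal (by positivity : 0 ≤ 1 / (2 * β) * exp (-|_| / β)), smul_eq_mul]

lemma integral_id_laplaceMeasure : ∫ x, x ∂laplaceMeasure β = 0 := by
  rw [laplaceMeasure, integral_withDensity_eq_integral_toReal_smul (by fun_prop)
    (.of_forall fun _ ↦ ENNReal.ofReal_lt_top)]
  have h := integral_neg_eq_self
    (fun x ↦ (ENNReal.ofReal (1 / (2 * β) * exp (-|x| / β))).toReal • x) volume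
  simp only [abs_neg, smul_neg, integral_neg] at h
  linarith

lemma integral_sq_laplaceMeasure (hβ : 0 < β) : ∫ x, x ^ 2 ∂laplaceMeasure β = 2 * β ^ 2 := by
  have h := integral_rpow_mul_exp_neg_mul_Ioi (a := 3) (r := β⁻¹) (by norm_num) (by positivity)
  have hGamma : Gamma 3 = 2 := by
    rw [show (3 : ℝ) = 2 + 1 by norm_num, Gamma_add_one two_ne_zero, Gamma_two]; norm_num
  have hf : ∀ x : ℝ, 1 / (2 * β) * exp (-|x| / β) * x ^ 2
      = (2 * β)⁻¹ * (|x| ^ ((3 : ℝ) - 1) * exp (-(β⁻¹ * |x|))) := fun x ↦ by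
    rw [show (3 : ℝ) - 1 = (2 : ℕ) by norm_num, rpow_natCast, sq_abs]; ring_nf
  rw [integral_laplaceMeasure hβ.le]
  simp_rw [hf]
  rw [integral_comp_abs (f := fun y ↦ (2 * β)⁻¹ * (y ^ ((3 : ℝ) - 1) * exp (-(β⁻¹ * y)))),
    integral_const_mul, h, hGamma, one_div, inv_inv, show (3 : ℝ) = (3 : ℕ) by norm_num,
    rpow_natCast]
  field_simp

lemma integrable_sq_laplaceMeasure (hβ : 0 < β) :
    Integrable (fun x ↦ x ^ 2) (laplaceMeasure β) :=
  .of_integral_ne_zero <| by rw [integral_sq_laplaceMeasure hβ]; positivity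

end Laplace

section LaplaceNoise

variable {Ω : Type*} [MeasurableSpace Ω] {P : Measure Ω} {L : Ω → ℝ} {β : ℝ}

lemma integral_eq_zero_of_map_eq_laplaceMeasure (hL : Measurable L)
    (hlaw : P.map L = laplaceMeasure β) : P[L] = 0 := by
  rw [← integral_id_laplaceMeasure (β := β), ← hlaw,
    integral_map hL.aemeasurable (f := fun x ↦ x) aestronglyMeasurable_id]

lemma memLp_two_of_map_eq_laplaceMeasure (hβ : 0 < β) (hL : Measurable L)
    (hlaw : P.map L = laplaceMeasure β) : MemLp L 2 P := by
  have h : MemLp id 2 (P.map L) := by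
    rw [memLp_two_iff_integrable_sq aestronglyMeasurable_id, hlaw]
    exact integrable_sq_laplaceMeasure hβ
  exact (memLp_map_measure_iff aestronglyMeasurable_id hL.aemeasurable).1 h

lemma variance_of_map_eq_laplaceMeasure (hβ : 0 < β) (hL : Measurable L)
    (hlaw : P.map L = laplaceMeasure β) : Var[L; P] = 2 * β ^ 2 := by
  rw [variance_of_integral_eq_zero hL.aemeasurable
    (integral_eq_zero_of_map_eq_laplaceMeasure hL hlaw), ← integral_sq_laplaceMeasure hβ, ← hlaw,
    integral_map hL.aemeasurable (by fun_prop)]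

end LaplaceNoise

section ZeroOne

variable {Ω : Type*} [MeasurableSpace Ω] {P : Measure Ω}

lemma integral_of_eq_zero_or_one {X : Ω → ℝ} (hX : Measurable X)
    (h01 : ∀ ω, X ω = 0 ∨ X ω = 1) : P[X] = P.real {ω | X ω = 1} := by
  have hind : X = {ω | X ω = 1}.indicator 1 := by
    funext ω; rcases h01 ω with h | h <;> simp [Set.indicator, h]
  conv_lhs => rw [hind]
  exact integral_indicator_one (hX (measurableSet_singleton 1))

lemma memLp_of_eq_zero_or_one [IsFiniteMeasure P] {X : Ω → ℝ} (hX : Measurable X)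
    (h01 : ∀ ω, X ω = 0 ∨ X ω = 1) (q : ENNReal) : MemLp X q P :=
  .of_bound hX.aestronglyMeasurable 1 (.of_forall fun ω ↦ by rcases h01 ω with h | h <;> simp [h])

lemma variance_of_eq_zero_or_one [IsProbabilityMeasure P] {X : Ω → ℝ} (hX : Measurable X)
    (h01 : ∀ ω, X ω = 0 ∨ X ω = 1) :
    Var[X; P] = P.real {ω | X ω = 1} * (1 - P.real {ω | X ω = 1}) := by
  have hsq : X ^ 2 = X := by funext ω; rcases h01 ω with h | h <;> simp [h]
  rw [variance_eq_sub (memLp_of_eq_zero_or_one hX h01 2), hsq, integral_of_eq_zero_or_one hX h01]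
  ring

variable [IsProbabilityMeasure P] {ι : Type*} [Fintype ι] {b : ι → Ω → ℝ} {p : ℝ}

lemma integral_sum_of_eq_zero_or_one (hb : ∀ i, Measurable (b i))
    (h01 : ∀ i ω, b i ω = 0 ∨ b i ω = 1) (hp : ∀ i, P.real {ω | b i ω = 1} = p) :
    P[∑ i, b i] = Fintype.card ι * p := by
  simp only [Finset.sum_apply]
  rw [integral_finsetSum _ fun i _ ↦ (memLp_of_eq_zero_or_one (hb i) (h01 i) 1).integrable le_rfl]
  simp [integral_of_eq_zero_or_one (hb _) (h01 _), hp]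

lemma variance_sum_of_eq_zero_or_one (hb : ∀ i, Measurable (b i))
    (h01 : ∀ i ω, b i ω = 0 ∨ b i ω = 1) (hp : ∀ i, P.real {ω | b i ω = 1} = p)
    (hindep : Pairwise fun i j ↦ IndepFun (b i) (b j) P) :
    Var[∑ i, b i; P] = Fintype.card ι * (p * (1 - p)) := by
  rw [IndepFun.variance_sum (fun i _ ↦ memLp_of_eq_zero_or_one (hb i) (h01 i) 2)
    fun i _ j _ hij ↦ hindep hij]
  simp [variance_of_eq_zero_or_one (hb _) (h01 _), hp]

end ZeroOne

lemma integral_sq_sub_eq_variance {Ω : Type*} [MeasurableSpace Ω] {P : Measure Ω} {X : Ω → ℝ}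
    {c : ℝ} (hX : AEMeasurable X P) (hc : P[X] = c) : ∫ ω, (X ω - c) ^ 2 ∂P = Var[X; P] := by
  rw [variance_eq_integral hX, hc]

section AffineCombination

variable {Ω : Type*} [MeasurableSpace Ω] {P : Measure Ω} [IsProbabilityMeasure P] {Y L : Ω → ℝ}

lemma integral_const_add_mul_add (hY : Integrable Y P) (hL : Integrable L P) (a c : ℝ) :
    ∫ ω, a + c * Y ω + L ω ∂P = a + c * P[Y] + P[L] := by
  have hcY : Integrable (fun ω ↦ c * Y ω) P := hY.const_mul c
  have haY : Integrable (fun ω ↦ a + c * Y ω) P := (integrable_const a).add hcY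
  rw [integral_add haY hL, integral_add (integrable_const a) hcY, integral_const_mul]
  simp

lemma variance_const_add_mul_add_of_indepFun (hY : MemLp Y 2 P) (hL : MemLp L 2 P)
    (hYL : IndepFun Y L P) (a c : ℝ) :
    Var[fun ω ↦ a + c * Y ω + L ω; P] = c ^ 2 * Var[Y; P] + Var[L; P] := by
  have hcYL : MemLp (fun ω ↦ c * Y ω + L ω) 2 P := (hY.const_mul c).add hL
  simp_rw [add_assoc]
  rw [variance_const_add hcYL.aestronglyMeasurable,
    IndepFun.variance_fun_add (hY.const_mul c) hL (hYL.comp (measurable_const_mul c) measurable_id),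
    variance_const_mul]

end AffineCombination

lemma indepFun_sum_of_iIndepFun_option {Ω ι : Type*} [MeasurableSpace Ω] {P : Measure Ω}
    [Fintype ι] {L : Ω → ℝ} {b : ι → Ω → ℝ} (hL : Measurable L) (hb : ∀ i, Measurable (b i))
    (hindep : iIndepFun (fun o : Option ι ↦ Option.elim o L b) P) :
    IndepFun (∑ i, b i) L P := by
  have h := hindep.indepFun_finsetSum_of_notMem (s := Finset.univ.map .some) (i := none)
    (by rintro (_ | i); exacts [hL, hb i]) (by simp)
  rw [Finset.sum_map] at h
  exact h

lemma debiased_eq_affine {Ω : Type*} {m : ℕ} {b : Fin m → Ω → ℝ} {L : Ω → ℝ} {t : ℝ}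
    (ht : t ≠ 0) (hm : (m : ℝ) ≠ 0) :
    (fun ω ↦ (1 / t) * ((1 / (m : ℝ)) * ∑ i, b i ω - 1 / 2 + t / 2) + L ω)
      = fun ω ↦ (t - 1) / (2 * t) + 1 / (t * m) * (∑ i, b i) ω + L ω := by
  funext ω
  rw [Finset.sum_apply]
  field_simp
  ring

section DebiasedEstimator

variable {Ω : Type*} [MeasurableSpace Ω] {P : Measure Ω} [IsProbabilityMeasure P] {m : ℕ}
  {b : Fin m → Ω → ℝ} {L : Ω → ℝ} {t p : ℝ}

lemma integral_debiased (ht : t ≠ 0) (hm : (m : ℝ) ≠ 0) (hb : ∀ i, Measurable (b i))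
    (h01 : ∀ i ω, b i ω = 0 ∨ b i ω = 1) (hp : ∀ i, P.real {ω | b i ω = 1} = p)
    (hL : Integrable L P) (hL0 : P[L] = 0) :
    ∫ ω, (1 / t) * ((1 / (m : ℝ)) * ∑ i, b i ω - 1 / 2 + t / 2) + L ω ∂P
      = (p - (1 - t) / 2) / t := by
  have hY : Integrable (∑ i, b i) P :=
    (memLp_finsetSum' _ fun i _ ↦ memLp_of_eq_zero_or_one (hb i) (h01 i) 1).integrable le_rfl
  rw [debiased_eq_affine ht hm, integral_const_add_mul_add hY hL,
    integral_sum_of_eq_zero_or_one hb h01 hp, hL0, Fintype.card_fin]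
  field_simp
  ring

lemma variance_debiased (ht : t ≠ 0) (hm : (m : ℝ) ≠ 0) (hb : ∀ i, Measurable (b i))
    (h01 : ∀ i ω, b i ω = 0 ∨ b i ω = 1) (hp : ∀ i, P.real {ω | b i ω = 1} = p)
    (hLm : Measurable L) (hL : MemLp L 2 P)
    (hindep : iIndepFun (fun o : Option (Fin m) ↦ Option.elim o L b) P) :
    Var[fun ω ↦ (1 / t) * ((1 / (m : ℝ)) * ∑ i, b i ω - 1 / 2 + t / 2) + L ω; P]
      = p * (1 - p) / (t ^ 2 * m) + Var[L; P] := by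
  have hY : MemLp (∑ i, b i) 2 P :=
    memLp_finsetSum' _ fun i _ ↦ memLp_of_eq_zero_or_one (hb i) (h01 i) 2
  rw [debiased_eq_affine ht hm, variance_const_add_mul_add_of_indepFun hY hL
      (indepFun_sum_of_iIndepFun_option hLm hb hindep),
    variance_sum_of_eq_zero_or_one hb h01 hp
      fun i j hij ↦ hindep.indepFun (Option.some_injective _ |>.ne hij), Fintype.card_fin]
  field_simp

end DebiasedEstimator

theorem stmt_13_general {Ω : Type*} [MeasurableSpace Ω] (P : Measure Ω) [IsProbabilityMeasure P]
    (ε : ℝ) (hε0 : 0 < ε) (U ℓ : ℕ) (hU : 1 ≤ U)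
    (hdvd : 2 ^ ℓ ∣ U) (m : ℕ) (hm : m = U / 2 ^ ℓ) (d : ℝ)
    (hd : d ∈ Set.Icc (0 : ℝ) 1)
    (t : ℝ) (ht : t = Real.tanh (ε / 2))
    (b : Fin m → Ω → ℝ) (L : Ω → ℝ)
    (hbmeas : ∀ i, Measurable (b i)) (hLmeas : Measurable L)
    (hb01 : ∀ i ω, b i ω = 0 ∨ b i ω = 1)
    (hbdist : ∀ i, P {ω | b i ω = 1} = ENNReal.ofReal (1 / 2 + t * (d - 1 / 2)))
    (hLlaw : Measure.map L P = laplaceMeasure (2 ^ ℓ / (ε * U)))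
    (hindep : iIndepFun (fun o : Option (Fin m) => Option.elim o L b) P) :
    (∫ ω, ((1 / t) * ((1 / (m : ℝ)) * ∑ i, b i ω - 1 / 2 + t / 2) + L ω) ∂P) = d ∧
    (∫ ω, (((1 / t) * ((1 / (m : ℝ)) * ∑ i, b i ω - 1 / 2 + t / 2) + L ω) - d) ^ 2 ∂P) ≤
      ((2 : ℝ) ^ ℓ / 4) / (U * t ^ 2) + 2 ^ (2 * ℓ + 1) / (U ^ 2 * ε ^ 2) := by
  have ht0 : 0 < t := ht ▸ tanh_pos_of_pos (by positivity)
  have hUm : (U : ℝ) = 2 ^ ℓ * m := by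
    rw [hm, Nat.cast_div hdvd (by positivity)]; push_cast; field_simp
  have hm0 : (0 : ℝ) < m := pos_of_mul_pos_right (hUm ▸ Nat.cast_pos.2 hU) (by positivity)
  have hp0 : 0 ≤ 1 / 2 + t * (d - 1 / 2) := by nlinarith [hd.1, tanh_lt_one (ε / 2)]
  set p := 1 / 2 + t * (d - 1 / 2)
  have hpb : ∀ i, P.real {ω | b i ω = 1} = p := fun i ↦ by
    rw [measureReal_def, hbdist, ENNReal.toReal_ofReal hp0]
  have hβ : (0 : ℝ) < 2 ^ ℓ / (ε * U) := by positivity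
  have hL := memLp_two_of_map_eq_laplaceMeasure hβ hLmeas hLlaw
  have hmean : ∫ ω, (1 / t) * ((1 / (m : ℝ)) * ∑ i, b i ω - 1 / 2 + t / 2) + L ω ∂P = d := by
    rw [integral_debiased ht0.ne' hm0.ne' hbmeas hb01 hpb (hL.integrable one_le_two)
      (integral_eq_zero_of_map_eq_laplaceMeasure hLmeas hLlaw)]
    field_simp
    ring
  refine ⟨hmean, ?_⟩
  rw [integral_sq_sub_eq_variance (by fun_prop) hmean,
    variance_debiased ht0.ne' hm0.ne' hbmeas hb01 hpb hLmeas hL hindep,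
    variance_of_map_eq_laplaceMeasure hβ hLmeas hLlaw]
  gcongr ?_ + ?_
  · calc p * (1 - p) / (t ^ 2 * m) ≤ 1 / 4 / (t ^ 2 * m) := by
          gcongr; nlinarith [sq_nonneg (p - 1 / 2)]
      _ = 2 ^ ℓ / 4 / (U * t ^ 2) := by rw [hUm]; field_simp
  · rw [pow_succ (2 : ℝ) (2 * ℓ), pow_mul']
    exact le_of_eq (by ring)

/-- Bias and mean squared error of Pan-Private Distinct Sampling (PPDS) at fixed level `ℓ`:
with `t = tanh(ε/2)` and `m = U/2^ℓ`, if `b_1, …, b_m` are i.i.d.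
`Bernoulli(1/2 + t(d − 1/2))`, `L` is an independent `Laplace(0, 2^ℓ/(εU))` random
variable, and `d̃ = (1/t)((1/m)∑ b_i − 1/2 + t/2) + L`, then `E[d̃] = d` and
`E[(d̃ − d)²] ≤ 2^{ℓ−2}/(U·t²) + 2^{2ℓ+1}/(U²ε²)`. -/
theorem stmt_13 {Ω : Type*} [MeasurableSpace Ω] (P : Measure Ω) [IsProbabilityMeasure P]
    (ε : ℝ) (hε0 : 0 < ε) (hε1 : ε ≤ 1 / 2) (U ℓ : ℕ) (hU : 1 ≤ U)
    (hdvd : 2 ^ ℓ ∣ U) (m : ℕ) (hm : m = U / 2 ^ ℓ) (d : ℝ)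
    (hd : d ∈ Set.Icc (0 : ℝ) 1)
    (t : ℝ) (ht : t = Real.tanh (ε / 2))
    (b : Fin m → Ω → ℝ) (L : Ω → ℝ)
    (hbmeas : ∀ i, Measurable (b i)) (hLmeas : Measurable L)
    (hb01 : ∀ i ω, b i ω = 0 ∨ b i ω = 1)
    (hbdist : ∀ i, P {ω | b i ω = 1} = ENNReal.ofReal (1 / 2 + t * (d - 1 / 2)))
    (hLlaw : Measure.map L P = laplaceMeasure (2 ^ ℓ / (ε * U)))
    (hindep : iIndepFun (fun o : Option (Fin m) => Option.elim o L b) P) :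
    (∫ ω, ((1 / t) * ((1 / (m : ℝ)) * ∑ i, b i ω - 1 / 2 + t / 2) + L ω) ∂P) = d ∧
    (∫ ω, (((1 / t) * ((1 / (m : ℝ)) * ∑ i, b i ω - 1 / 2 + t / 2) + L ω) - d) ^ 2 ∂P) ≤
      ((2 : ℝ) ^ ℓ / 4) / (U * t ^ 2) + 2 ^ (2 * ℓ + 1) / (U ^ 2 * ε ^ 2) :=
  stmt_13_general P ε hε0 U ℓ hU hdvd m hm d hd t ht b L hbmeas hLmeas hb01 hbdist hLlaw hindep
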